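/- arXiv:0707.2241 — 3 statements merged into one kernel-verified Lean document; each statement's English description precedes it below -/
import Mathlib

section
/- Under the hypotheses of the quasi-homogeneous Laurent series ansatz, the first-order coefficients c^{(1)} = (c_1^{(1)},…,c_n^{(1)}) satisfy (𝓛 − I) c^{(1)} = 0, where 𝓛 is the matrix with entries ∂f_i/∂w_j(c^{(0)}) + δ_{ij} s_i. In particular c^{(1)} lies in the eigenspace of 𝓛 for eigenvalue 1. -/
/-!
Put `g_i(z) = z ^ s_i * w_i(z) = ∑ₖ c_i^{(k)} zᵏ`, holomorphic near `0`. The differential equation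
and quasi-homogeneity give the Euler-type relation `z g_i'(z) = s_i g_i(z) + f_i(g(z))` for small
`z ≠ 0`; both sides are analytic at `0`, so it holds near `0`. Differentiating it at `0` gives
`c_i^{(1)} = s_i c_i^{(1)} + Df_i(c^{(0)}) c^{(1)}`, which is `𝓛 c^{(1)} = c^{(1)}`.
-/

open Filter Topology FormalMultilinearSeries
open scoped ENNReal Matrix

section PowerSeries

variable {𝕜 : Type*} [NontriviallyNormedField 𝕜] {a : ℕ → 𝕜}

theorem FormalMultilinearSeries.le_radius_ofScalars_of_summable {z : 𝕜}
    (h : Summable fun k => a k * z ^ k) : (‖z‖₊ : ℝ≥0∞) ≤ (ofScalars 𝕜 a).radius :=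
  (ofScalars 𝕜 a).le_radius_of_tendsto (l := 0) <| by
    simpa [ofScalars_norm, norm_mul, norm_pow] using h.tendsto_atTop_zero.norm

theorem FormalMultilinearSeries.ofScalars_radius_pos_of_eventually_summable
    (h : ∀ᶠ z in 𝓝[≠] (0 : 𝕜), Summable fun k => a k * z ^ k) :
    0 < (ofScalars 𝕜 a).radius := by
  obtain ⟨z, hz, hz0⟩ := (h.and self_mem_nhdsWithin).exists
  exact (by simpa using hz0 : 0 < (‖z‖₊ : ℝ≥0∞)).trans_le (le_radius_ofScalars_of_summable hz)

variable [CompleteSpace 𝕜]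

theorem FormalMultilinearSeries.hasFPowerSeriesAt_ofScalarsSum
    (h : 0 < (ofScalars 𝕜 a).radius) : HasFPowerSeriesAt (ofScalarsSum a) (ofScalars 𝕜 a) 0 :=
  ((ofScalars 𝕜 a).hasFPowerSeriesOnBall h).hasFPowerSeriesAt

theorem FormalMultilinearSeries.hasDerivAt_ofScalarsSum_zero
    (h : 0 < (ofScalars 𝕜 a).radius) : HasDerivAt (ofScalarsSum a) (a 1) 0 := by
  simpa [ofScalars_apply_eq] using (hasFPowerSeriesAt_ofScalarsSum h).hasDerivAt

theorem FormalMultilinearSeries.ofScalarsSum_eventuallyEq_of_hasSum {g : 𝕜 → 𝕜}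
    (h : ∀ᶠ z in 𝓝[≠] 0, HasSum (fun k => a k * z ^ k) (g z)) :
    ofScalarsSum a =ᶠ[𝓝[≠] 0] g := by
  have hpos := ofScalars_radius_pos_of_eventually_summable (h.mono fun _ hz => hz.summable)
  filter_upwards [h, nhdsWithin_le_nhds (Metric.eball_mem_nhds 0 hpos)] with z hz hzr
  exact ((ofScalars 𝕜 a).hasSum hzr).unique
    (by simpa only [ofScalars_apply_eq, smul_eq_mul] using hz)

end PowerSeries

theorem mul_deriv_pow_mul {𝕜 : Type*} [NontriviallyNormedField 𝕜] {w : 𝕜 → 𝕜} {w' z : 𝕜}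
    (s : ℕ) (hw : HasDerivAt w w' z) :
    z * deriv (fun x => x ^ s * w x) z = s * (z ^ s * w z) + z ^ (s + 1) * w' := by
  rw [((hasDerivAt_pow s z).fun_mul hw).deriv]
  rcases s with _ | s
  · simp
  · simp only [Nat.add_sub_cancel]
    push_cast
    ring

theorem Matrix.mulVec_eq_of_apply_eq_add_ite {ι R : Type*} [Fintype ι] [DecidableEq ι]
    [CommSemiring R] (D : ι → (ι → R) →ₗ[R] R) (d : ι → R) (L : Matrix ι ι R)
    (hL : ∀ i j, L i j = D i (Pi.single j 1) + if i = j then d i else 0) (v : ι → R) :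
    L *ᵥ v = fun i => D i v + d i * v i := by
  have hsplit : L = LinearMap.toMatrix' (LinearMap.pi D) + Matrix.diagonal d := by
    ext i j
    simp [hL, Matrix.diagonal_apply, LinearMap.toMatrix'_apply]
  ext i
  rw [hsplit, Matrix.add_mulVec, Pi.add_apply, LinearMap.toMatrix'_mulVec, Matrix.mulVec_diagonal]
  rfl

section QuasiHomogeneous

variable {n : ℕ} {s : Fin n → ℕ} {f : Fin n → (Fin n → ℂ) → ℂ} {c : ℕ → Fin n → ℂ}
  {w : ℂ → Fin n → ℂ}

def QuasiHomogeneous (s : Fin n → ℕ) (f : Fin n → (Fin n → ℂ) → ℂ) : Prop :=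
  ∀ i, ∀ α : ℂ, α ≠ 0 → ∀ w : Fin n → ℂ, f i (fun j => α ^ (s j) * w j) = α ^ (s i + 1) * f i w

/-- The Taylor series `∑ₖ c k i zᵏ`, which equals `z ^ s i * w z i` for small `z ≠ 0`. -/
noncomputable def regularPart (c : ℕ → Fin n → ℂ) (z : ℂ) : Fin n → ℂ :=
  fun i => ofScalarsSum (fun k => c k i) z

theorem mul_deriv_regularPart_eq (hquasi : QuasiHomogeneous s f)
    {z : ℂ} (hz : z ≠ 0) (hG : regularPart c =ᶠ[𝓝 z] fun x j => x ^ s j * w x j)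
    (hode : ∀ i, HasDerivAt (fun x => w x i) (f i (w z)) z) (i : Fin n) :
    z * deriv (fun x => regularPart c x i) z = s i * regularPart c z i + f i (regularPart c z) := by
  have hGi : (fun x => regularPart c x i) =ᶠ[𝓝 z] fun x => x ^ s i * w x i :=
    hG.mono fun x hx => congrFun hx i
  rw [hGi.deriv_eq, mul_deriv_pow_mul _ (hode i), hG.eq_of_nhds, hquasi i z hz]

theorem eventually_mul_deriv_regularPart_eq (hquasi : QuasiHomogeneous s f)
    (hsum : ∀ i, ∀ᶠ z in 𝓝[≠] 0, HasSum (fun k => c k i * z ^ k) (z ^ s i * w z i))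
    (hode : ∀ i, ∀ᶠ z in 𝓝[≠] 0, HasDerivAt (fun x => w x i) (f i (w z)) z) (i : Fin n) :
    ∀ᶠ z in 𝓝[≠] 0,
      z * deriv (fun x => regularPart c x i) z = s i * regularPart c z i + f i (regularPart c z) := by
  have hG : regularPart c =ᶠ[𝓝[≠] 0] fun x j => x ^ s j * w x j := by
    filter_upwards [eventually_all.2 fun j => ofScalarsSum_eventuallyEq_of_hasSum (hsum j)]
      with z hz using funext hz
  filter_upwards [eventually_eventually_nhdsWithin.2 hG, self_mem_nhdsWithin,
    eventually_all.2 hode] with z hGz hz hodez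
  rw [isOpen_compl_singleton.nhdsWithin_eq hz] at hGz
  exact mul_deriv_regularPart_eq hquasi hz hGz hodez i

theorem first_order_relation (hf : ∀ i x, AnalyticAt ℂ (f i) x)
    (hquasi : QuasiHomogeneous s f)
    (hsum : ∀ i, ∀ᶠ z in 𝓝[≠] 0, HasSum (fun k => c k i * z ^ k) (z ^ s i * w z i))
    (hode : ∀ i, ∀ᶠ z in 𝓝[≠] 0, HasDerivAt (fun x => w x i) (f i (w z)) z) (i : Fin n) :
    c 1 i = s i * c 1 i + fderiv ℂ (f i) (c 0) (c 1) := by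
  have hpos j := ofScalars_radius_pos_of_eventually_summable ((hsum j).mono fun _ h => h.summable)
  have hG0 : regularPart c 0 = c 0 := funext fun j => by simp [regularPart]
  have hGderiv : HasDerivAt (regularPart c) (c 1) 0 :=
    hasDerivAt_pi.2 fun j => hasDerivAt_ofScalarsSum_zero (hpos j)
  have hGan : AnalyticAt ℂ (regularPart c) 0 :=
    AnalyticAt.pi fun j => (hasFPowerSeriesAt_ofScalarsSum (hpos j)).analyticAt
  have hGian : AnalyticAt ℂ (fun x => regularPart c x i) 0 :=
    (hasFPowerSeriesAt_ofScalarsSum (hpos i)).analyticAt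
  have hfG : HasFDerivAt (f i) (fderiv ℂ (f i) (c 0)) (regularPart c 0) :=
    hG0 ▸ (hf i (c 0)).differentiableAt.hasFDerivAt
  have hlhs : HasDerivAt (fun z => z * deriv (fun x => regularPart c x i) z) (c 1 i) 0 := by
    simpa [(hasDerivAt_pi.1 hGderiv i).deriv] using
      (hasDerivAt_id' 0).fun_mul hGian.deriv.differentiableAt.hasDerivAt
  have hrhs : HasDerivAt (fun z => s i * regularPart c z i + f i (regularPart c z))
      (s i * c 1 i + fderiv ℂ (f i) (c 0) (c 1)) 0 :=
    ((hasDerivAt_pi.1 hGderiv i).const_mul _).add (hfG.comp_hasDerivAt 0 hGderiv)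
  -- identity theorem: the Euler relation extends across `0`
  have heq := ((analyticAt_id.mul hGian.deriv).frequently_eq_iff_eventually_eq
    ((analyticAt_const.mul hGian).add ((hf i _).comp hGan))).1
    (eventually_mul_deriv_regularPart_eq hquasi hsum hode i).frequently
  exact hlhs.unique (hrhs.congr_of_eventuallyEq heq)

end QuasiHomogeneous

theorem first_order_coefficients_eigenvector_general (n : ℕ) (s : Fin n → ℕ)
    (f : Fin n → (Fin n → ℂ) → ℂ) (hfpoly : ∀ i, ∃ p : MvPolynomial (Fin n) ℂ,
      ∀ w, f i w = MvPolynomial.eval w p)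
    (hquasi : ∀ i, ∀ α : ℂ, α ≠ 0 → ∀ w : Fin n → ℂ,
      f i (fun j => α ^ (s j) * w j) = α ^ (s i + 1) * f i w)
    (c : ℕ → Fin n → ℂ)
    (w : ℂ → Fin n → ℂ) (r : ℝ) (hr : 0 < r)
    (hsum : ∀ i, ∀ z : ℂ, z ≠ 0 → ‖z‖ < r →
      HasSum (fun k : ℕ => c k i * z ^ k) (z ^ (s i : ℕ) * w z i))
    (hode : ∀ i, ∀ z : ℂ, z ≠ 0 → ‖z‖ < r →
      HasDerivAt (fun z => w z i) (f i (w z)) z)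
    (L : Matrix (Fin n) (Fin n) ℂ)
    (hL : ∀ i j, L i j = fderiv ℂ (f i) (c 0) (Pi.single j 1) +
      if i = j then (s i : ℂ) else 0) :
    Matrix.mulVec (L - 1) (c 1) = 0 ∧ Matrix.mulVec L (c 1) = c 1 := by
  have hf i x : AnalyticAt ℂ (f i) x := by
    obtain ⟨p, hp⟩ := hfpoly i
    rw [show f i = (MvPolynomial.eval · p) from funext hp]
    exact AnalyticOnNhd.eval_mvPolynomial p x trivial
  have hpunct {P : ℂ → Prop} (h : ∀ z, z ≠ 0 → ‖z‖ < r → P z) : ∀ᶠ z in 𝓝[≠] 0, P z :=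
    eventually_nhdsWithin_iff.2 <| Metric.eventually_nhds_iff.2
      ⟨r, hr, fun z hz hz0 => h z hz0 (by simpa using hz)⟩
  have hrel := first_order_relation hf hquasi (fun i => hpunct (hsum i)) (fun i => hpunct (hode i))
  have hL1 : L *ᵥ c 1 = c 1 := by
    rw [Matrix.mulVec_eq_of_apply_eq_add_ite
      (fun i => (fderiv ℂ (f i) (c 0) : (Fin n → ℂ) →ₗ[ℂ] ℂ)) (fun i => (s i : ℂ)) L hL]
    exact funext fun i => by simp only [ContinuousLinearMap.coe_coe]; linear_combination -hrel i
  exact ⟨by rw [Matrix.sub_mulVec, Matrix.one_mulVec, hL1, sub_self], hL1⟩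

/-- for a formal Laurent solution of the quasi-homogeneous system, the
first-order coefficients satisfy `(𝓛 - I) c^{(1)} = 0`, where
`𝓛_{ij} = ∂f_i/∂w_j (c^{(0)}) + δ_{ij} s_i`; i.e. `c^{(1)}` is in the eigenspace of `𝓛`
for the eigenvalue `1`. -/
theorem first_order_coefficients_eigenvector (n : ℕ) (s : Fin n → ℕ) (hs : ∀ j, 0 < s j)
    (f : Fin n → (Fin n → ℂ) → ℂ) (hfpoly : ∀ i, ∃ p : MvPolynomial (Fin n) ℂ,
      ∀ w, f i w = MvPolynomial.eval w p)
    (hquasi : ∀ i, ∀ α : ℂ, α ≠ 0 → ∀ w : Fin n → ℂ,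
      f i (fun j => α ^ (s j) * w j) = α ^ (s i + 1) * f i w)
    (c : ℕ → Fin n → ℂ) (hc0 : c 0 ≠ 0)
    (hind : ∀ i, (s i : ℂ) * c 0 i + f i (c 0) = 0)
    (w : ℂ → Fin n → ℂ) (r : ℝ) (hr : 0 < r)
    (hsum : ∀ i, ∀ z : ℂ, z ≠ 0 → ‖z‖ < r →
      HasSum (fun k : ℕ => c k i * z ^ k) (z ^ (s i : ℕ) * w z i))
    (hode : ∀ i, ∀ z : ℂ, z ≠ 0 → ‖z‖ < r →
      HasDerivAt (fun z => w z i) (f i (w z)) z)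
    (L : Matrix (Fin n) (Fin n) ℂ)
    (hL : ∀ i j, L i j = fderiv ℂ (f i) (c 0) (Pi.single j 1) +
      if i = j then (s i : ℂ) else 0) :
    Matrix.mulVec (L - 1) (c 1) = 0 ∧ Matrix.mulVec L (c 1) = c 1 :=
  first_order_coefficients_eigenvector_general n s f hfpoly hquasi c w r hr hsum hode L hL
end

section
/- The function Φ(z) = (1 + nABz − √((1 − 2nAB(1+2nBC)z + n²A²B²z²)))/(2nB(1+nBC)) satisfies the functional equation Φ(z) = Az + CB²(nΦ(z))²/(1 − BnΦ(z)) in a neighborhood of z = 0, with Φ(0) = 0. -/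
/-!
`Φ(z)` is the root, vanishing at `z = 0`, of the quadratic
`nB(1 + nBC) t² - (1 + nABz) t + Az`, whose discriminant is the radicand of `Φ`. Clearing the
denominator `1 - Bnt`, the functional equation is exactly this quadratic equation in `t = Φ(z)`.
Near `z = 0` the radicand is close to `1` and `BnΦ(z)` to `0`, so the square root is real and
the denominator does not vanish.
-/

open Filter Topology

def majorantRadicand (n A B C z : ℝ) : ℝ :=
  1 - 2 * n * A * B * (1 + 2 * n * B * C) * z + n ^ 2 * A ^ 2 * B ^ 2 * z ^ 2

theorem majorantRadicand_eq_discrim (n A B C z : ℝ) :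
    majorantRadicand n A B C z =
      discrim (n * B * (1 + n * B * C)) (-(1 + n * A * B * z)) (A * z) := by
  unfold majorantRadicand discrim
  ring

theorem continuous_majorantRadicand (n A B C : ℝ) : Continuous (majorantRadicand n A B C) := by
  unfold majorantRadicand
  fun_prop

theorem majorant_quadratic_root {n A B C z : ℝ} (hK : n * B * (1 + n * B * C) ≠ 0)
    (hz : 0 ≤ majorantRadicand n A B C z) :
    let t := (1 + n * A * B * z - √(majorantRadicand n A B C z)) / (2 * n * B * (1 + n * B * C))
    n * B * (1 + n * B * C) * (t * t) + -(1 + n * A * B * z) * t + A * z = 0 := by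
  intro t
  have hdiscrim := majorantRadicand_eq_discrim n A B C z
  rw [← Real.mul_self_sqrt hz] at hdiscrim
  refine (quadratic_eq_zero_iff hK hdiscrim.symm t).2 (Or.inr ?_)
  simp only [t, neg_neg, ← mul_assoc]

theorem eq_add_div_of_majorant_quadratic {K : Type*} [Field K] {n A B C z t : K}
    (hroot : n * B * (1 + n * B * C) * (t * t) + -(1 + n * A * B * z) * t + A * z = 0)
    (hden : 1 - B * n * t ≠ 0) :
    t = A * z + C * B ^ 2 * (n * t) ^ 2 / (1 - B * n * t) := by
  rw [← sub_eq_iff_eq_add', eq_div_iff hden]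
  linear_combination -hroot

theorem majorant_function_solves_equation_general (n : ℕ) (hn : 0 < n)
    (A B C : ℝ) (hB : 0 < B) (hC : 0 < C)
    (Φ : ℝ → ℝ)
    (hΦ : ∀ z : ℝ, Φ z = (1 + n * A * B * z -
      Real.sqrt (1 - 2 * n * A * B * (1 + 2 * n * B * C) * z + n ^ 2 * A ^ 2 * B ^ 2 * z ^ 2))
        / (2 * n * B * (1 + n * B * C))) :
    Φ 0 = 0 ∧ ∀ᶠ z in nhds (0 : ℝ),
      Φ z = A * z + C * B ^ 2 * (n * Φ z) ^ 2 / (1 - B * n * Φ z) := by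
  have hK : (n : ℝ) * B * (1 + n * B * C) ≠ 0 := by positivity
  have hΦ0 : Φ 0 = 0 := by simp [hΦ]
  have hΦcont : Continuous Φ := by
    rw [funext hΦ]
    fun_prop
  have hden : ∀ᶠ z in 𝓝 0, 1 - B * n * Φ z ≠ 0 :=
    (continuous_const.sub (continuous_const.mul hΦcont)).continuousAt.eventually_ne
      (by simp [hΦ0])
  have hrad : ∀ᶠ z in 𝓝 0, 0 < majorantRadicand n A B C z :=
    continuousAt_const.eventually_lt (continuous_majorantRadicand n A B C).continuousAt
      (by simp [majorantRadicand])
  refine ⟨hΦ0, ?_⟩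
  filter_upwards [hden, hrad] with z hz hR
  exact eq_add_div_of_majorant_quadratic (hΦ z ▸ majorant_quadratic_root hK hR.le) hz

/-- the explicit algebraic function `Φ` solves the majorant functional
equation near `z = 0` and vanishes at `0`. -/
theorem majorant_function_solves_equation (n : ℕ) (hn : 0 < n)
    (A B C : ℝ) (hA : 0 < A) (hB : 0 < B) (hC : 0 < C)
    (Φ : ℝ → ℝ)
    (hΦ : ∀ z : ℝ, Φ z = (1 + n * A * B * z -
      Real.sqrt (1 - 2 * n * A * B * (1 + 2 * n * B * C) * z + n ^ 2 * A ^ 2 * B ^ 2 * z ^ 2))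
        / (2 * n * B * (1 + n * B * C))) :
    Φ 0 = 0 ∧ ∀ᶠ z in nhds (0 : ℝ),
      Φ z = A * z + C * B ^ 2 * (n * Φ z) ^ 2 / (1 - B * n * Φ z) :=
  majorant_function_solves_equation_general n hn A B C hB hC Φ hΦ
end

section
/- For the Kowalewski system, the quartic function H₄ = ((m₁+im₂)²/4 − (γ₁+iγ₂)) · ((m₁−im₂)²/4 − (γ₁−iγ₂)) is a first integral: dH₄/dt = 0 along every solution. -/
/-!
Write `u = m₁ + ε m₂`, `w = γ₁ + ε γ₂` and `ξ = u²/4 − w` with `ε² = −1`. The equations of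
motion give `u̇ = −ε m₃ u + 2ε γ₃` and `ẇ = −2ε m₃ w + ε γ₃ u`, so the `γ₃` terms cancel in
`ξ̇ = u u̇ / 2 − ẇ = −2ε m₃ ξ`. The two factors of `H₄` are `ξ` for `ε = i` and `ε = −i`, which
grow at opposite rates `∓2i m₃`, so their product is constant.
-/

open Complex

theorem HasDerivAt.fun_mul_eq_zero_of_opposite_rates {𝕜 𝔸 : Type*} [NontriviallyNormedField 𝕜]
    [NormedCommRing 𝔸] [NormedAlgebra 𝕜 𝔸] {f g : 𝕜 → 𝔸} {c : 𝔸} {x : 𝕜}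
    (hf : HasDerivAt f (c * f x) x) (hg : HasDerivAt g (-c * g x) x) :
    HasDerivAt (fun y => f y * g y) 0 x := by
  refine (hf.fun_mul hg).congr_deriv ?_
  ring

section KowalewskiVariable

variable {m1 m2 m3 g1 g2 g3 : ℝ → ℂ} {ε : ℂ} {t : ℝ}

theorem hasDerivAt_kowalewski_momentum
    (hm1 : HasDerivAt m1 (m2 t * m3 t) t)
    (hm2 : HasDerivAt m2 (-(m1 t * m3 t) + 2 * g3 t) t) (hε : ε ^ 2 = -1) :
    HasDerivAt (fun t => m1 t + ε * m2 t) (-ε * m3 t * (m1 t + ε * m2 t) + 2 * ε * g3 t) t := by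
  refine (hm1.fun_add (hm2.const_mul ε)).congr_deriv ?_
  linear_combination m3 t * m2 t * hε

theorem hasDerivAt_kowalewski_gamma
    (hg1 : HasDerivAt g1 (2 * m3 t * g2 t - m2 t * g3 t) t)
    (hg2 : HasDerivAt g2 (m1 t * g3 t - 2 * m3 t * g1 t) t) (hε : ε ^ 2 = -1) :
    HasDerivAt (fun t => g1 t + ε * g2 t)
      (-2 * ε * m3 t * (g1 t + ε * g2 t) + ε * g3 t * (m1 t + ε * m2 t)) t := by
  refine (hg1.fun_add (hg2.const_mul ε)).congr_deriv ?_
  linear_combination (2 * m3 t * g2 t - g3 t * m2 t) * hε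

theorem hasDerivAt_kowalewski_variable
    (hm1 : HasDerivAt m1 (m2 t * m3 t) t)
    (hm2 : HasDerivAt m2 (-(m1 t * m3 t) + 2 * g3 t) t)
    (hg1 : HasDerivAt g1 (2 * m3 t * g2 t - m2 t * g3 t) t)
    (hg2 : HasDerivAt g2 (m1 t * g3 t - 2 * m3 t * g1 t) t) (hε : ε ^ 2 = -1) :
    HasDerivAt (fun t => (m1 t + ε * m2 t) ^ 2 / 4 - (g1 t + ε * g2 t))
      (-2 * ε * m3 t * ((m1 t + ε * m2 t) ^ 2 / 4 - (g1 t + ε * g2 t))) t := by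
  have hu := hasDerivAt_kowalewski_momentum hm1 hm2 hε
  have hw := hasDerivAt_kowalewski_gamma (m1 := m1) (m2 := m2) hg1 hg2 hε
  refine (((hu.fun_pow 2).div_const 4).fun_sub hw).congr_deriv ?_
  ring

end KowalewskiVariable

theorem kowalewski_quartic_integral_general (m1 m2 m3 g1 g2 g3 : ℝ → ℂ)
    (hm1 : ∀ t, HasDerivAt m1 (m2 t * m3 t) t)
    (hm2 : ∀ t, HasDerivAt m2 (-(m1 t * m3 t) + 2 * g3 t) t)
    (hg1 : ∀ t, HasDerivAt g1 (2 * m3 t * g2 t - m2 t * g3 t) t)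
    (hg2 : ∀ t, HasDerivAt g2 (m1 t * g3 t - 2 * m3 t * g1 t) t) :
    ∀ t, HasDerivAt (fun t =>
      ((m1 t + I * m2 t) ^ 2 / 4 - (g1 t + I * g2 t)) *
      ((m1 t - I * m2 t) ^ 2 / 4 - (g1 t - I * g2 t))) 0 t := by
  intro t
  have hξ := hasDerivAt_kowalewski_variable (hm1 t) (hm2 t) (hg1 t) (hg2 t) I_sq
  have hη := hasDerivAt_kowalewski_variable (hm1 t) (hm2 t) (hg1 t) (hg2 t)
    (ε := -I) (by rw [neg_sq, I_sq])
  simp only [neg_mul, ← sub_eq_add_neg] at hη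
  exact hξ.fun_mul_eq_zero_of_opposite_rates (hη.congr_deriv (by ring))

open Complex in
/-- the Kowalewski quartic
`H₄ = ((m₁+im₂)²/4 − (γ₁+iγ₂))((m₁−im₂)²/4 − (γ₁−iγ₂))` is a first integral of the
Kowalewski system. -/
theorem kowalewski_quartic_integral (m1 m2 m3 g1 g2 g3 : ℝ → ℂ)
    (hm1 : ∀ t, HasDerivAt m1 (m2 t * m3 t) t)
    (hm2 : ∀ t, HasDerivAt m2 (-(m1 t * m3 t) + 2 * g3 t) t)
    (hm3 : ∀ t, HasDerivAt m3 (-(2 * g2 t)) t)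
    (hg1 : ∀ t, HasDerivAt g1 (2 * m3 t * g2 t - m2 t * g3 t) t)
    (hg2 : ∀ t, HasDerivAt g2 (m1 t * g3 t - 2 * m3 t * g1 t) t)
    (hg3 : ∀ t, HasDerivAt g3 (m2 t * g1 t - m1 t * g2 t) t) :
    ∀ t, HasDerivAt (fun t =>
      ((m1 t + I * m2 t) ^ 2 / 4 - (g1 t + I * g2 t)) *
      ((m1 t - I * m2 t) ^ 2 / 4 - (g1 t - I * g2 t))) 0 t :=
  kowalewski_quartic_integral_general m1 m2 m3 g1 g2 g3 hm1 hm2 hg1 hg2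
end
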